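/- arXiv:2009.12055 — 8 statements merged into one kernel-verified Lean document; each statement's English description precedes it below -/
import Mathlib

section
/- Let $N$ be a statistical submanifold of a holomorphic statistical manifold $\overline{N}$. Then $\mathcal{A}^*_V(tU) = \mathcal{A}^*_U(tV)$ for all normal vector fields $U, V$ if and only if $\nabla^{\perp}_X(fV) = f\,\nabla^{\perp *}_X V$ for all tangent $X$ and normal $V$. -/
open scoped BigOperators

/- Abstract algebraic model of the geometry of a statistical manifold:
`A` plays the role of the ring of smooth functions on the manifold `N̄`,
`V` plays the role of the module of vector fields `Γ(TN̄)`.  -/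

variable (A : Type) [CommRing A] [Algebra ℝ A]
variable (V : Type) [AddCommGroup V] [Module A V] [Module ℝ V] [IsScalarTower ℝ A V]

/-- The basic context: a (pseudo-Riemannian) metric `g`, the action `D` of vector
fields on functions as derivations, and the Lie bracket of vector fields. -/
structure StatContext where
  g : V →ₗ[A] V →ₗ[A] A
  g_symm : ∀ X Y : V, g X Y = g Y X
  g_nondeg : ∀ X : V, (∀ Y : V, g X Y = 0) → X = 0
  D : V → Derivation ℝ A A
  bracket : V → V → V

variable {A V}

/-- An affine connection. -/
structure AffConn (ctx : StatContext A V) where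
  op : V → V → V
  add_left : ∀ X Y Z : V, op (X + Y) Z = op X Z + op Y Z
  smul_left : ∀ (f : A) (X Y : V), op (f • X) Y = f • op X Y
  add_right : ∀ X Y Z : V, op X (Y + Z) = op X Y + op X Z
  leibniz : ∀ (X : V) (f : A) (Y : V), op X (f • Y) = ctx.D X f • Y + f • op X Y

/-- Torsion-freeness of a connection. -/
def IsTorsionFree (ctx : StatContext A V) (C : AffConn ctx) : Prop :=
  ∀ X Y : V, C.op X Y - C.op Y X = ctx.bracket X Y

/-- `(∇_X g)(Y, Z)`. -/
def nablaG (ctx : StatContext A V) (C : AffConn ctx) (X Y Z : V) : A :=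
  ctx.D X (ctx.g Y Z) - ctx.g (C.op X Y) Z - ctx.g Y (C.op X Z)

/-- `(∇, g)` is a statistical structure: `∇` is torsion-free and `∇g` is symmetric. -/
def IsStatistical (ctx : StatContext A V) (C : AffConn ctx) : Prop :=
  IsTorsionFree ctx C ∧ ∀ X Y Z : V, nablaG ctx C X Y Z = nablaG ctx C Y X Z

/-- `∇*` is the dual connection of `∇` with respect to `g`:
`X g(Y,Z) = g(∇_X Y, Z) + g(Y, ∇*_X Z)`. -/
def IsDual (ctx : StatContext A V) (C Cs : AffConn ctx) : Prop :=
  ∀ X Y Z : V, ctx.D X (ctx.g Y Z) = ctx.g (C.op X Y) Z + ctx.g Y (Cs.op X Z)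
/-- A holomorphic statistical manifold: a Kaehler manifold `(N̄, g, J)` (with
Levi-Civita connection `LC`) together with a statistical structure `(∇, g)` with
dual connection `∇*` such that the Kaehler form `ω(X,Y) = g(X, JY)` is `∇`-parallel. -/
structure HolStatMan (ctx : StatContext A V) where
  C : AffConn ctx
  Cs : AffConn ctx
  J : V →ₗ[A] V
  statC : IsStatistical ctx C
  dual : IsDual ctx C Cs
  Jsq : ∀ X : V, J (J X) = -X
  Jiso : ∀ X Y : V, ctx.g (J X) (J Y) = ctx.g X Y
  LC : AffConn ctx
  LC_tf : IsTorsionFree ctx LC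
  LC_metric : ∀ X Y Z : V, ctx.D X (ctx.g Y Z) = ctx.g (LC.op X Y) Z + ctx.g Y (LC.op X Z)
  LC_J : ∀ X Y : V, LC.op X (J Y) = J (LC.op X Y)
  omega_par : ∀ X Y Z : V,
    ctx.D X (ctx.g Y (J Z)) = ctx.g (C.op X Y) (J Z) + ctx.g Y (J (C.op X Z))

/-- A statistical submanifold `N` of a holomorphic statistical manifold, encoded by the
submodule `T` of tangent vector fields, the submodule `Nor` of normal vector fields,
the induced dual connections `nab, nabS`, the imbedding curvature tensors (second
fundamental forms) `B, Bs`, the shape operators `Aop, AopS`, the normal connections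
`perp, perpS` (Gauss and Weingarten formulas), and the decompositions
`J X = P X + F X` (tangent `X`) and `J U = t' U + f' U` (normal `U`). -/
structure StatSub (ctx : StatContext A V) (M : HolStatMan ctx) where
  T : Submodule A V
  Nor : Submodule A V
  compl : IsCompl T Nor
  orth : ∀ X ∈ T, ∀ U ∈ Nor, ctx.g X U = 0
  bracket_mem : ∀ X ∈ T, ∀ Y ∈ T, ctx.bracket X Y ∈ T
  nab : V → V → V
  nabS : V → V → V
  B : V → V → V
  Bs : V → V → V
  Aop : V → V → V
  AopS : V → V → V
  perp : V → V → V
  perpS : V → V → V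
  nab_mem : ∀ X ∈ T, ∀ Y ∈ T, nab X Y ∈ T
  nabS_mem : ∀ X ∈ T, ∀ Y ∈ T, nabS X Y ∈ T
  B_mem : ∀ X ∈ T, ∀ Y ∈ T, B X Y ∈ Nor
  Bs_mem : ∀ X ∈ T, ∀ Y ∈ T, Bs X Y ∈ Nor
  B_symm : ∀ X ∈ T, ∀ Y ∈ T, B X Y = B Y X
  Bs_symm : ∀ X ∈ T, ∀ Y ∈ T, Bs X Y = Bs Y X
  A_mem : ∀ U ∈ Nor, ∀ X ∈ T, Aop U X ∈ T
  As_mem : ∀ U ∈ Nor, ∀ X ∈ T, AopS U X ∈ T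
  perp_mem : ∀ X ∈ T, ∀ U ∈ Nor, perp X U ∈ Nor
  perpS_mem : ∀ X ∈ T, ∀ U ∈ Nor, perpS X U ∈ Nor
  gauss : ∀ X ∈ T, ∀ Y ∈ T, M.C.op X Y = nab X Y + B X Y
  gaussS : ∀ X ∈ T, ∀ Y ∈ T, M.Cs.op X Y = nabS X Y + Bs X Y
  wein : ∀ X ∈ T, ∀ U ∈ Nor, M.C.op X U = - Aop U X + perp X U
  weinS : ∀ X ∈ T, ∀ U ∈ Nor, M.Cs.op X U = - AopS U X + perpS X U
  P : V → V
  F : V → V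
  t' : V → V
  f' : V → V
  PF_dec : ∀ X ∈ T, M.J X = P X + F X
  P_mem : ∀ X ∈ T, P X ∈ T
  F_mem : ∀ X ∈ T, F X ∈ Nor
  tf_dec : ∀ U ∈ Nor, M.J U = t' U + f' U
  t_mem : ∀ U ∈ Nor, t' U ∈ T
  f_mem : ∀ U ∈ Nor, f' U ∈ Nor

/-- A CR-statistical submanifold: the tangent bundle splits orthogonally as
`𝒟 ⊕ 𝒟⊥` with `𝒟` holomorphic (`J𝒟 = 𝒟`) and `𝒟⊥` totally real (`J𝒟⊥ ⊆ T⊥N`). -/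
structure CRSub (ctx : StatContext A V) (M : HolStatMan ctx) (S : StatSub ctx M) where
  Dd : Submodule A V
  Dp : Submodule A V
  Dd_le : Dd ≤ S.T
  Dp_le : Dp ≤ S.T
  orthD : ∀ X ∈ Dd, ∀ Z ∈ Dp, ctx.g X Z = 0
  spanD : Dd ⊔ Dp = S.T
  J_Dd : ∀ X ∈ Dd, M.J X ∈ Dd
  J_Dp : ∀ Z ∈ Dp, M.J Z ∈ S.Nor

section Aux

variable {ctx : StatContext A V}

lemma AffConn.op_zero (C : AffConn ctx) (X : V) : C.op X 0 = 0 := by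
  have h := C.add_right X 0 0
  rw [add_zero] at h
  exact (left_eq_add.mp h)

lemma AffConn.op_neg (C : AffConn ctx) (X Y : V) : C.op X (-Y) = -C.op X Y := by
  have h := C.add_right X Y (-Y)
  rw [add_neg_cancel, C.op_zero] at h
  exact (neg_eq_of_add_eq_zero_right h.symm).symm

/-- Key Kähler-statistical identity: `∇̄*_X (J Z) = J (∇̄_X Z)`. -/
lemma csJ (M : HolStatMan ctx) (X Z : V) :
    M.Cs.op X (M.J Z) = M.J (M.C.op X Z) := by
  rw [← sub_eq_zero]
  apply ctx.g_nondeg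
  intro Y
  rw [ctx.g_symm, map_sub]
  have h1 := M.dual X Y (M.J Z)
  have h2 := M.omega_par X Y Z
  have h3 : ctx.g Y (M.Cs.op X (M.J Z)) = ctx.g Y (M.J (M.C.op X Z)) :=
    add_left_cancel (h1.symm.trans h2)
  rw [h3, sub_self]

/-- Dual form: `∇̄_X (J W) = J (∇̄*_X W)`. -/
lemma cJ (M : HolStatMan ctx) (X W : V) :
    M.C.op X (M.J W) = M.J (M.Cs.op X W) := by
  have h := csJ M X (M.J W)
  rw [M.Jsq W, M.Cs.op_neg] at h
  have h2 := congrArg M.J h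
  rw [map_neg, M.Jsq] at h2
  exact (neg_inj.mp h2).symm

variable {M : HolStatMan ctx}

/-- Shape operator / second fundamental form duality: `g(B(X,Y), U) = g(A*_U X, Y)`. -/
lemma shape_B (S : StatSub ctx M) {X Y U : V}
    (hX : X ∈ S.T) (hY : Y ∈ S.T) (hU : U ∈ S.Nor) :
    ctx.g (S.B X Y) U = ctx.g (S.AopS U X) Y := by
  have h := M.dual X Y U
  rw [S.orth Y hY U hU, map_zero, S.gauss X hX Y hY, S.weinS X hX U hU] at h
  rw [map_add, LinearMap.add_apply, map_add, map_neg] at h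
  rw [S.orth _ (S.nab_mem X hX Y hY) U hU,
      S.orth Y hY _ (S.perpS_mem X hX U hU)] at h
  rw [ctx.g_symm (S.AopS U X) Y]
  linear_combination -h

/-- `A*` is self-adjoint: `g(A*_U X, Y) = g(A*_U Y, X)`. -/
lemma aops_symm (S : StatSub ctx M) {X Y U : V}
    (hX : X ∈ S.T) (hY : Y ∈ S.T) (hU : U ∈ S.Nor) :
    ctx.g (S.AopS U X) Y = ctx.g (S.AopS U Y) X := by
  rw [← shape_B S hX hY hU, ← shape_B S hY hX hU, S.B_symm X hX Y hY]

/-- `F` and `-t'` are adjoint: `g(F X, U) = -g(X, t' U)`. -/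
lemma gF (S : StatSub ctx M) {X U : V} (hX : X ∈ S.T) (hU : U ∈ S.Nor) :
    ctx.g (S.F X) U = - ctx.g X (S.t' U) := by
  have h1 : ctx.g (M.J X) U = ctx.g (S.F X) U := by
    rw [S.PF_dec X hX, map_add, LinearMap.add_apply,
        S.orth _ (S.P_mem X hX) U hU, zero_add]
  have hU' : U = -(M.J (M.J U)) := by rw [M.Jsq, neg_neg]
  have h2 : ctx.g (M.J X) U = - ctx.g X (S.t' U) := by
    nth_rewrite 1 [hU']
    rw [map_neg, M.Jiso, S.tf_dec U hU, map_add,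
        S.orth X hX _ (S.f_mem U hU), add_zero]
  rw [← h1, h2]

/-- Nondegeneracy restricted to the tangent bundle. -/
lemma nondegT (S : StatSub ctx M) {Z : V} (hZ : Z ∈ S.T)
    (h : ∀ Y ∈ S.T, ctx.g Z Y = 0) : Z = 0 := by
  apply ctx.g_nondeg
  intro W
  have hW : W ∈ S.T ⊔ S.Nor := by rw [S.compl.sup_eq_top]; trivial
  obtain ⟨y, hy, u, hu, rfl⟩ := Submodule.mem_sup.mp hW
  rw [map_add, h y hy, S.orth Z hZ u hu, add_zero]

/-- Nondegeneracy restricted to the normal bundle. -/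
lemma nondegN (S : StatSub ctx M) {Z : V} (hZ : Z ∈ S.Nor)
    (h : ∀ U ∈ S.Nor, ctx.g Z U = 0) : Z = 0 := by
  apply ctx.g_nondeg
  intro W
  have hW : W ∈ S.T ⊔ S.Nor := by rw [S.compl.sup_eq_top]; trivial
  obtain ⟨y, hy, u, hu, rfl⟩ := Submodule.mem_sup.mp hW
  rw [map_add, h u hu, ctx.g_symm Z y, S.orth y hy Z hZ, add_zero]

/-- The normal component of the identity `∇̄_X (J U) = J (∇̄*_X U)`. -/
lemma star_id (S : StatSub ctx M) {X U : V} (hX : X ∈ S.T) (hU : U ∈ S.Nor) :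
    S.perp X (S.f' U) - S.f' (S.perpS X U)
      = -(S.B X (S.t' U) + S.F (S.AopS U X)) := by
  have h := cJ M X U
  rw [S.tf_dec U hU, M.C.add_right,
      S.gauss X hX _ (S.t_mem U hU), S.wein X hX _ (S.f_mem U hU),
      S.weinS X hX U hU, map_add, map_neg,
      S.PF_dec _ (S.As_mem U hU X hX), S.tf_dec _ (S.perpS_mem X hX U hU)] at h
  -- h : nab X t'U + B X t'U + (-Aop (f'U) X + perp X (f'U))
  --       = -(P a + F a) + (t' p + f' p)
  set a := S.AopS U X with ha
  set p := S.perpS X U with hp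
  have hz : S.B X (S.t' U) + S.perp X (S.f' U) + S.F a - S.f' p
      = -(S.nab X (S.t' U)) + S.Aop (S.f' U) X - S.P a + S.t' p := by
    rw [← sub_eq_zero] at h ⊢
    rw [← h]; abel
  have hzN : S.B X (S.t' U) + S.perp X (S.f' U) + S.F a - S.f' p ∈ S.Nor := by
    refine Submodule.sub_mem _ (Submodule.add_mem _ (Submodule.add_mem _ ?_ ?_) ?_) ?_
    · exact S.B_mem X hX _ (S.t_mem U hU)
    · exact S.perp_mem X hX _ (S.f_mem U hU)
    · exact S.F_mem _ (S.As_mem U hU X hX)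
    · exact S.f_mem _ (S.perpS_mem X hX U hU)
  have hzT : S.B X (S.t' U) + S.perp X (S.f' U) + S.F a - S.f' p ∈ S.T := by
    rw [hz]
    refine Submodule.add_mem _ (Submodule.sub_mem _ (Submodule.add_mem _ ?_ ?_) ?_) ?_
    · exact Submodule.neg_mem _ (S.nab_mem X hX _ (S.t_mem U hU))
    · exact S.A_mem _ (S.f_mem U hU) X hX
    · exact S.P_mem _ (S.As_mem U hU X hX)
    · exact S.t_mem _ (S.perpS_mem X hX U hU)
  have hz0 : S.B X (S.t' U) + S.perp X (S.f' U) + S.F a - S.f' p = 0 :=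
    (Submodule.disjoint_def.mp S.compl.disjoint) _ hzT hzN
  rw [← sub_eq_zero]
  rw [← hz0]; abel

end Aux

/-- `A*_V (tU) = A*_U (tV)` for all normal `U, V` iff
`∇⊥_X (fV) = f ∇⊥*_X V` for all tangent `X` and normal `V`. -/
theorem shape_t_symm_iff_perp_f_commutes
    (ctx : StatContext A V) (M : HolStatMan ctx) (S : StatSub ctx M) :
    (∀ U ∈ S.Nor, ∀ W ∈ S.Nor, S.AopS W (S.t' U) = S.AopS U (S.t' W)) ↔
      (∀ X ∈ S.T, ∀ U ∈ S.Nor, S.perp X (S.f' U) = S.f' (S.perpS X U)) := by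
  constructor
  · intro hA X hX U hU
    rw [← sub_eq_zero, star_id S hX hU, neg_eq_zero]
    apply nondegN S
    · exact Submodule.add_mem _ (S.B_mem X hX _ (S.t_mem U hU))
        (S.F_mem _ (S.As_mem U hU X hX))
    · intro W hW
      rw [map_add, LinearMap.add_apply,
        shape_B S hX (S.t_mem U hU) hW, gF S (S.As_mem U hU X hX) hW,
        aops_symm S hX (S.t_mem U hU) hW, hA U hU W hW,
        aops_symm S (S.t_mem W hW) hX hU, add_neg_cancel]
  · intro hP U hU W hW
    have hB : ∀ X ∈ S.T, ∀ U' ∈ S.Nor,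
        S.B X (S.t' U') + S.F (S.AopS U' X) = 0 := by
      intro X hX U' hU'
      have h := star_id S hX hU'
      rw [hP X hX U' hU', sub_self] at h
      exact (neg_eq_zero.mp h.symm)
    have key : ∀ X ∈ S.T, ∀ U' ∈ S.Nor, ∀ W' ∈ S.Nor,
        ctx.g (S.AopS W' X) (S.t' U') = ctx.g (S.AopS U' X) (S.t' W') := by
      intro X hX U' hU' W' hW'
      have h := congrArg (fun z => ctx.g z W') (hB X hX U' hU')
      simp only [map_add, LinearMap.add_apply, map_zero, LinearMap.zero_apply] at h
      rw [shape_B S hX (S.t_mem U' hU') hW', gF S (S.As_mem U' hU' X hX) hW'] at h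
      linear_combination h
    rw [← sub_eq_zero]
    apply nondegT S
    · exact Submodule.sub_mem _ (S.As_mem W hW _ (S.t_mem U hU))
        (S.As_mem U hU _ (S.t_mem W hW))
    · intro Y hY
      rw [map_sub, LinearMap.sub_apply,
        aops_symm S (S.t_mem U hU) hY hW, aops_symm S (S.t_mem W hW) hY hU,
        key Y hY U hU W hW, sub_self]
end

section
/- Let $N$ be a holomorphic statistical submanifold (i.e., $\mathcal{J}(T_x N) = T_x N$ for all $x$) of a holomorphic statistical manifold $\overline{N}$. Then both second fundamental forms are trace-free: $\operatorname{tr}_g \mathcal{B} = 0$ and $\operatorname{tr}_g \mathcal{B}^* = 0$; in particular $N$ is minimal with respect to both dual connections. -/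
open scoped BigOperators

/- Abstract algebraic model of the geometry of a statistical manifold:
`A` plays the role of the ring of smooth functions on the manifold `N̄`,
`V` plays the role of the module of vector fields `Γ(TN̄)`.  -/

variable (A : Type) [CommRing A] [Algebra ℝ A]
variable (V : Type) [AddCommGroup V] [Module A V] [Module ℝ V] [IsScalarTower ℝ A V]

variable {A V}

/-- On a holomorphic statistical submanifold (i.e. `J`-invariant),
both second fundamental forms are trace-free with respect to any orthonormal frame
`{e₁, …, e_k, Je₁, …, Je_k}` of the tangent bundle; in particular the submanifold is
minimal with respect to both dual connections. -/
theorem holomorphic_submanifold_traceless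
    (ctx : StatContext A V) (M : HolStatMan ctx) (S : StatSub ctx M)
    (hholo : ∀ X ∈ S.T, M.J X ∈ S.T)
    (k : ℕ) (e : Fin k → V) (he_mem : ∀ i, e i ∈ S.T)
    (he_on : ∀ i j, ctx.g (e i) (e j) = if i = j then (1 : A) else 0)
    (he_J : ∀ i j, ctx.g (e i) (M.J (e j)) = 0)
    (he_span : Submodule.span A (Set.range e ∪ Set.range fun i => M.J (e i)) = S.T) :
    (∑ i, (S.B (e i) (e i) + S.B (M.J (e i)) (M.J (e i)))) = 0 ∧
    (∑ i, (S.Bs (e i) (e i) + S.Bs (M.J (e i)) (M.J (e i)))) = 0 := by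
  classical
  -- basic facts about connections
  have opzero : ∀ (C : AffConn ctx) (X : V), C.op X 0 = 0 := by
    intro C X
    have h := C.leibniz X (0 : A) 0
    simpa using h
  have opneg : ∀ (C : AffConn ctx) (X Z : V), C.op X (-Z) = - C.op X Z := by
    intro C X Z
    have h := C.add_right X Z (-Z)
    rw [add_neg_cancel, opzero] at h
    exact eq_neg_of_add_eq_zero_left (by rw [add_comm]; exact h.symm)
  -- `∇*_X (JZ) = J (∇_X Z)`
  have CsJ : ∀ X Z : V, M.Cs.op X (M.J Z) = M.J (M.C.op X Z) := by
    intro X Z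
    have key : ∀ Y : V, ctx.g Y (M.Cs.op X (M.J Z) - M.J (M.C.op X Z)) = 0 := by
      intro Y
      have h1 := M.dual X Y (M.J Z)
      have h2 := M.omega_par X Y Z
      have h3 : ctx.g Y (M.Cs.op X (M.J Z)) = ctx.g Y (M.J (M.C.op X Z)) := by
        linear_combination h2 - h1
      rw [map_sub, h3, sub_self]
    have h0 := ctx.g_nondeg _ (fun Y => by rw [ctx.g_symm]; exact key Y)
    exact sub_eq_zero.mp h0
  -- `∇_X (JZ) = J (∇*_X Z)`
  have CJ : ∀ X Z : V, M.C.op X (M.J Z) = M.J (M.Cs.op X Z) := by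
    intro X Z
    have h := CsJ X (M.J Z)
    rw [M.Jsq, opneg] at h
    have h2 := congrArg M.J h.symm
    rw [M.Jsq, map_neg] at h2
    exact neg_injective h2
  -- `g(JX, Y) = -g(X, JY)`
  have gJ : ∀ X Y : V, ctx.g (M.J X) Y = - ctx.g X (M.J Y) := by
    intro X Y
    calc ctx.g (M.J X) Y = ctx.g (M.J X) (- M.J (M.J Y)) := by rw [M.Jsq, neg_neg]
      _ = - ctx.g (M.J X) (M.J (M.J Y)) := by rw [map_neg]
      _ = - ctx.g X (M.J Y) := by rw [M.Jiso]
  -- J preserves the normal bundle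
  have JNor : ∀ U ∈ S.Nor, M.J U ∈ S.Nor := by
    intro U hU
    have hJU : M.J U ∈ S.T ⊔ S.Nor := by rw [S.compl.sup_eq_top]; trivial
    obtain ⟨t, ht, n, hn, htn⟩ := Submodule.mem_sup.mp hJU
    have ht0 : t = 0 := by
      apply ctx.g_nondeg
      intro Y
      have hY : Y ∈ S.T ⊔ S.Nor := by rw [S.compl.sup_eq_top]; trivial
      obtain ⟨y, hy, z, hz, hyz⟩ := Submodule.mem_sup.mp hY
      have hty : ctx.g t y = 0 := by
        have h1 : ctx.g (M.J U) y = 0 := by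
          rw [gJ]
          rw [ctx.g_symm U (M.J y), S.orth _ (hholo y hy) U hU, neg_zero]
        have h2 : ctx.g n y = 0 := by
          rw [ctx.g_symm]; exact S.orth y hy n hn
        have h3 : ctx.g (t + n) y = 0 := by rw [htn]; exact h1
        rw [map_add, LinearMap.add_apply, h2, add_zero] at h3
        exact h3
      have htz : ctx.g t z = 0 := S.orth t ht z hz
      rw [← hyz, map_add, hty, htz, add_zero]
    rw [ht0, zero_add] at htn
    rw [← htn]; exact hn
  -- `B*(X, JY) = J B(X, Y)` and `B(X, JY) = J B*(X, Y)`
  have TNbot : S.T ⊓ S.Nor = ⊥ := S.compl.inf_eq_bot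
  have key : ∀ (C1 C2 : AffConn ctx), (∀ X Z : V, C2.op X (M.J Z) = M.J (C1.op X Z)) →
      ∀ (n1 n2 b1 b2 : V → V → V),
      (∀ X ∈ S.T, ∀ Y ∈ S.T, n1 X Y ∈ S.T) → (∀ X ∈ S.T, ∀ Y ∈ S.T, n2 X Y ∈ S.T) →
      (∀ X ∈ S.T, ∀ Y ∈ S.T, b1 X Y ∈ S.Nor) → (∀ X ∈ S.T, ∀ Y ∈ S.T, b2 X Y ∈ S.Nor) →
      (∀ X ∈ S.T, ∀ Y ∈ S.T, C1.op X Y = n1 X Y + b1 X Y) →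
      (∀ X ∈ S.T, ∀ Y ∈ S.T, C2.op X Y = n2 X Y + b2 X Y) →
      ∀ X ∈ S.T, ∀ Y ∈ S.T, b2 X (M.J Y) = M.J (b1 X Y) := by
    intro C1 C2 hC n1 n2 b1 b2 hn1 hn2 hb1 hb2 hg1 hg2 X hX Y hY
    have hJY := hholo Y hY
    have h := hC X Y
    rw [hg2 X hX (M.J Y) hJY, hg1 X hX Y hY, map_add] at h
    have heq : n2 X (M.J Y) - M.J (n1 X Y) = M.J (b1 X Y) - b2 X (M.J Y) := by
      rw [sub_eq_sub_iff_add_eq_add]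
      rw [h]; abel
    have hmem : n2 X (M.J Y) - M.J (n1 X Y) ∈ S.T ⊓ S.Nor := by
      constructor
      · exact sub_mem (hn2 _ hX _ hJY) (hholo _ (hn1 _ hX _ hY))
      · rw [heq]
        exact sub_mem (JNor _ (hb1 _ hX _ hY)) (hb2 _ hX _ hJY)
    rw [TNbot, Submodule.mem_bot] at hmem
    rw [hmem] at heq
    have := sub_eq_zero.mp heq.symm
    exact this.symm
  have BsJ : ∀ X ∈ S.T, ∀ Y ∈ S.T, S.Bs X (M.J Y) = M.J (S.B X Y) :=
    key M.C M.Cs CsJ S.nab S.nabS S.B S.Bs S.nab_mem S.nabS_mem S.B_mem S.Bs_mem S.gauss S.gaussS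
  have BJ : ∀ X ∈ S.T, ∀ Y ∈ S.T, S.B X (M.J Y) = M.J (S.Bs X Y) :=
    key M.Cs M.C CJ S.nabS S.nab S.Bs S.B S.nabS_mem S.nab_mem S.Bs_mem S.B_mem S.gaussS S.gauss
  -- `B(JX, JY) = -B(X, Y)`, same for B*
  have BJJ : ∀ X ∈ S.T, ∀ Y ∈ S.T, S.B (M.J X) (M.J Y) = - S.B X Y := by
    intro X hX Y hY
    have h1 := BJ (M.J X) (hholo X hX) Y hY
    rw [S.Bs_symm _ (hholo X hX) _ hY, BsJ Y hY X hX, M.Jsq, S.B_symm _ hY _ hX] at h1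
    exact h1
  have BsJJ : ∀ X ∈ S.T, ∀ Y ∈ S.T, S.Bs (M.J X) (M.J Y) = - S.Bs X Y := by
    intro X hX Y hY
    have h1 := BsJ (M.J X) (hholo X hX) Y hY
    rw [S.B_symm _ (hholo X hX) _ hY, BJ Y hY X hX, M.Jsq, S.Bs_symm _ hY _ hX] at h1
    exact h1
  constructor
  · apply Finset.sum_eq_zero
    intro i _
    rw [BJJ (e i) (he_mem i) (e i) (he_mem i), add_neg_cancel]
  · apply Finset.sum_eq_zero
    intro i _
    rw [BsJJ (e i) (he_mem i) (e i) (he_mem i), add_neg_cancel]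
end

section
/- Let $N$ be a holomorphic statistical submanifold of a holomorphic statistical manifold $\overline{N}$. Then for every tangent vector field $X$, $g(\mathcal{S}(X, \mathcal{J}X)\mathcal{J}X, X) = g(\overline{\mathcal{S}}(X, \mathcal{J}X)\mathcal{J}X, X) - 2\, g(\mathcal{B}(X,X), \mathcal{B}^*(X,X))$, where $\mathcal{S} = \tfrac{1}{2}(R + R^*)$ and $\overline{\mathcal{S}} = \tfrac{1}{2}(\overline{R} + \overline{R}^*)$. -/
open scoped BigOperators

/- Abstract algebraic model of the geometry of a statistical manifold:
`A` plays the role of the ring of smooth functions on the manifold `N̄`,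
`V` plays the role of the module of vector fields `Γ(TN̄)`.  -/

variable (A : Type) [CommRing A] [Algebra ℝ A]
variable (V : Type) [AddCommGroup V] [Module A V] [Module ℝ V] [IsScalarTower ℝ A V]

variable {A V}

/-- The curvature tensor of a connection-like operation. -/
def curvOf (ctx : StatContext A V) (op : V → V → V) (X Y Z : V) : V :=
  op X (op Y Z) - op Y (op X Z) - op (ctx.bracket X Y) Z

section AuxLemmas
variable {A : Type} [CommRing A] [Algebra ℝ A]
variable {V : Type} [AddCommGroup V] [Module A V] [Module ℝ V] [IsScalarTower ℝ A V]

lemma AffConn.op_zero_right (ctx : StatContext A V) (C : AffConn ctx) (X : V) :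
    C.op X 0 = 0 := by
  have h := C.add_right X 0 0
  rw [add_zero] at h
  exact left_eq_add.mp h

lemma AffConn.op_neg_right (ctx : StatContext A V) (C : AffConn ctx) (X Y : V) :
    C.op X (-Y) = - C.op X Y := by
  have h := C.add_right X Y (-Y)
  rw [add_neg_cancel, C.op_zero_right] at h
  exact eq_neg_of_add_eq_zero_right h.symm

/-- Generic Gauss equation. -/
lemma gauss_curv (ctx : StatContext A V) (CC : AffConn ctx)
    (T Nor : Submodule A V)
    (horth : ∀ X ∈ T, ∀ U ∈ Nor, ctx.g X U = 0)
    (hbr : ∀ X ∈ T, ∀ Y ∈ T, ctx.bracket X Y ∈ T)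
    (nb Bf Ao pp Bd : V → V → V)
    (hnb : ∀ X ∈ T, ∀ Y ∈ T, nb X Y ∈ T)
    (hBf : ∀ X ∈ T, ∀ Y ∈ T, Bf X Y ∈ Nor)
    (hpp : ∀ X ∈ T, ∀ U ∈ Nor, pp X U ∈ Nor)
    (hg : ∀ X ∈ T, ∀ Y ∈ T, CC.op X Y = nb X Y + Bf X Y)
    (hw : ∀ X ∈ T, ∀ U ∈ Nor, CC.op X U = - Ao U X + pp X U)
    (hsh : ∀ X ∈ T, ∀ W ∈ T, ∀ U ∈ Nor, ctx.g (Ao U X) W = ctx.g (Bd X W) U) :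
    ∀ X ∈ T, ∀ Y ∈ T, ∀ Z ∈ T, ∀ W ∈ T,
      ctx.g (curvOf ctx CC.op X Y Z) W
        = ctx.g (curvOf ctx nb X Y Z) W
          + ctx.g (Bf X Z) (Bd Y W) - ctx.g (Bd X W) (Bf Y Z) := by
  intro X hX Y hY Z hZ W hW
  have key : ∀ P, P ∈ T → ∀ Q, Q ∈ T → ∀ R, R ∈ T →
      ctx.g (CC.op P (CC.op Q R)) W
        = ctx.g (nb P (nb Q R)) W - ctx.g (Bd P W) (Bf Q R) := by
    intro P hP Q hQ R hR
    rw [hg Q hQ R hR, CC.add_right, hg P hP _ (hnb Q hQ R hR),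
      hw P hP _ (hBf Q hQ R hR)]
    have h1 : ctx.g (Bf P (nb Q R)) W = 0 := by
      rw [ctx.g_symm]; exact horth W hW _ (hBf P hP _ (hnb Q hQ R hR))
    have h2 : ctx.g (pp P (Bf Q R)) W = 0 := by
      rw [ctx.g_symm]; exact horth W hW _ (hpp P hP _ (hBf Q hQ R hR))
    have h3 : ctx.g (Ao (Bf Q R) P) W = ctx.g (Bd P W) (Bf Q R) :=
      hsh P hP W hW _ (hBf Q hQ R hR)
    simp only [map_add, map_neg, LinearMap.add_apply, LinearMap.neg_apply, h1, h2, h3]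
    ring
  have hbrXY := hbr X hX Y hY
  have hlast : ctx.g (CC.op (ctx.bracket X Y) Z) W
      = ctx.g (nb (ctx.bracket X Y) Z) W := by
    rw [hg _ hbrXY Z hZ, map_add, LinearMap.add_apply]
    have h0 : ctx.g (Bf (ctx.bracket X Y) Z) W = 0 := by
      rw [ctx.g_symm]; exact horth W hW _ (hBf _ hbrXY Z hZ)
    rw [h0, add_zero]
  have e1 := key X hX Y hY Z hZ
  have e2 := key Y hY X hX Z hZ
  simp only [curvOf, map_sub, LinearMap.sub_apply]
  rw [e1, e2, hlast, ctx.g_symm (Bf X Z) (Bd Y W)]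
  ring

/-- `∇*_X (JZ) = J(∇_X Z)`. -/
lemma Cs_J (ctx : StatContext A V) (M : HolStatMan ctx) (X Z : V) :
    M.Cs.op X (M.J Z) = M.J (M.C.op X Z) := by
  have h : ∀ Y : V, ctx.g (M.Cs.op X (M.J Z) - M.J (M.C.op X Z)) Y = 0 := by
    intro Y
    have hd := M.dual X Y (M.J Z)
    have hp := M.omega_par X Y Z
    have e1 : ctx.g Y (M.Cs.op X (M.J Z)) = ctx.g Y (M.J (M.C.op X Z)) :=
      add_left_cancel (hd.symm.trans hp)
    rw [ctx.g_symm, map_sub, e1, sub_self]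
  exact sub_eq_zero.mp (ctx.g_nondeg _ h)

/-- `∇_X (JZ) = J(∇*_X Z)`. -/
lemma C_J (ctx : StatContext A V) (M : HolStatMan ctx) (X Z : V) :
    M.C.op X (M.J Z) = M.J (M.Cs.op X Z) := by
  have h := Cs_J ctx M X (M.J Z)
  rw [M.Jsq Z, M.Cs.op_neg_right] at h
  have h2 := congrArg M.J h
  rw [map_neg, M.Jsq] at h2
  exact (neg_inj.mp h2).symm

/-- On a J-invariant submanifold, `J` maps normals to normals. -/
lemma J_Nor (ctx : StatContext A V) (M : HolStatMan ctx) (S : StatSub ctx M)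
    (hholo : ∀ X ∈ S.T, M.J X ∈ S.T) :
    ∀ U ∈ S.Nor, M.J U ∈ S.Nor := by
  intro U hU
  have hsup : S.T ⊔ S.Nor = ⊤ := codisjoint_iff.mp S.compl.codisjoint
  have hmem : M.J U ∈ S.T ⊔ S.Nor := by rw [hsup]; trivial
  obtain ⟨t, ht, n, hn, htn⟩ := Submodule.mem_sup.mp hmem
  have hJU_tan : ∀ y ∈ S.T, ctx.g (M.J U) y = 0 := by
    intro y hy
    have e : ctx.g (M.J U) y = ctx.g (M.J (M.J U)) (M.J y) := (M.Jiso _ _).symm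
    rw [e, M.Jsq, map_neg, LinearMap.neg_apply, ctx.g_symm,
      S.orth (M.J y) (hholo y hy) U hU, neg_zero]
  have ht0 : t = 0 := by
    apply ctx.g_nondeg
    intro y
    have hymem : y ∈ S.T ⊔ S.Nor := by rw [hsup]; trivial
    obtain ⟨yt, hyt, yn, hyn, hy⟩ := Submodule.mem_sup.mp hymem
    have h1 : ctx.g t yn = 0 := S.orth t ht yn hyn
    have h2 : ctx.g t yt = 0 := by
      have htv : t = M.J U - n := by rw [← htn]; abel
      rw [htv, map_sub, LinearMap.sub_apply, hJU_tan yt hyt,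
        ctx.g_symm n yt, S.orth yt hyt n hn, sub_zero]
    rw [← hy, map_add, h1, h2, add_zero]
  rw [← htn, ht0, zero_add]; exact hn

/-- Uniqueness of tangent/normal decomposition. -/
lemma dec_unique (ctx : StatContext A V) (M : HolStatMan ctx) (S : StatSub ctx M)
    {t1 n1 t2 n2 : V} (ht1 : t1 ∈ S.T) (hn1 : n1 ∈ S.Nor)
    (ht2 : t2 ∈ S.T) (hn2 : n2 ∈ S.Nor) (h : t1 + n1 = t2 + n2) :
    t1 = t2 ∧ n1 = n2 := by
  have hd : t1 - t2 = n2 - n1 := by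
    rw [sub_eq_sub_iff_add_eq_add]
    rw [h]; exact add_comm _ _
  have hmemT : t1 - t2 ∈ S.T := sub_mem ht1 ht2
  have hmemN : t1 - t2 ∈ S.Nor := hd ▸ sub_mem hn2 hn1
  have h0 : t1 - t2 = 0 :=
    Submodule.disjoint_def.mp S.compl.disjoint _ hmemT hmemN
  have ht : t1 = t2 := sub_eq_zero.mp h0
  refine ⟨ht, ?_⟩
  rw [ht] at h
  exact add_left_cancel h

/-- `B*(X, JY) = J B(X,Y)` and `∇*_X JY = J ∇_X Y` on a J-invariant submanifold. -/
lemma Bs_J (ctx : StatContext A V) (M : HolStatMan ctx) (S : StatSub ctx M)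
    (hholo : ∀ X ∈ S.T, M.J X ∈ S.T) :
    ∀ X ∈ S.T, ∀ Y ∈ S.T, S.Bs X (M.J Y) = M.J (S.B X Y) := by
  intro X hX Y hY
  have h1 : S.nabS X (M.J Y) + S.Bs X (M.J Y)
      = M.J (S.nab X Y) + M.J (S.B X Y) := by
    rw [← S.gaussS X hX (M.J Y) (hholo Y hY), Cs_J, S.gauss X hX Y hY, map_add]
  exact (dec_unique ctx M S (S.nabS_mem X hX _ (hholo Y hY))
    (S.Bs_mem X hX _ (hholo Y hY)) (hholo _ (S.nab_mem X hX Y hY))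
    (J_Nor ctx M S hholo _ (S.B_mem X hX Y hY)) h1).2

/-- `B(X, JY) = J B*(X,Y)` on a J-invariant submanifold. -/
lemma B_J (ctx : StatContext A V) (M : HolStatMan ctx) (S : StatSub ctx M)
    (hholo : ∀ X ∈ S.T, M.J X ∈ S.T) :
    ∀ X ∈ S.T, ∀ Y ∈ S.T, S.B X (M.J Y) = M.J (S.Bs X Y) := by
  intro X hX Y hY
  have h1 : S.nab X (M.J Y) + S.B X (M.J Y)
      = M.J (S.nabS X Y) + M.J (S.Bs X Y) := by
    rw [← S.gauss X hX (M.J Y) (hholo Y hY), C_J, S.gaussS X hX Y hY, map_add]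
  exact (dec_unique ctx M S (S.nab_mem X hX _ (hholo Y hY))
    (S.B_mem X hX _ (hholo Y hY)) (hholo _ (S.nabS_mem X hX Y hY))
    (J_Nor ctx M S hholo _ (S.Bs_mem X hX Y hY)) h1).2

/-- Shape operator identity: `g(A_U X, W) = g(B*(X,W), U)`. -/
lemma shape_eq (ctx : StatContext A V) (M : HolStatMan ctx) (S : StatSub ctx M) :
    ∀ X ∈ S.T, ∀ W ∈ S.T, ∀ U ∈ S.Nor,
      ctx.g (S.Aop U X) W = ctx.g (S.Bs X W) U := by
  intro X hX W hW U hU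
  have hd := M.dual X U W
  rw [S.wein X hX U hU, S.gaussS X hX W hW] at hd
  have h0 : ctx.g U W = 0 := by rw [ctx.g_symm]; exact S.orth W hW U hU
  rw [h0, map_zero] at hd
  have h1 : ctx.g (S.perp X U) W = 0 := by
    rw [ctx.g_symm]; exact S.orth W hW _ (S.perp_mem X hX U hU)
  have h2 : ctx.g U (S.nabS X W) = 0 := by
    rw [ctx.g_symm]; exact S.orth _ (S.nabS_mem X hX W hW) U hU
  rw [map_add, LinearMap.add_apply, map_neg, LinearMap.neg_apply, h1, map_add, h2] at hd
  rw [ctx.g_symm (S.Bs X W) U]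
  linear_combination hd

/-- Dual shape operator identity: `g(A*_U X, W) = g(B(X,W), U)`. -/
lemma shapeS_eq (ctx : StatContext A V) (M : HolStatMan ctx) (S : StatSub ctx M) :
    ∀ X ∈ S.T, ∀ W ∈ S.T, ∀ U ∈ S.Nor,
      ctx.g (S.AopS U X) W = ctx.g (S.B X W) U := by
  intro X hX W hW U hU
  have hd := M.dual X W U
  rw [S.weinS X hX U hU, S.gauss X hX W hW] at hd
  have h0 : ctx.g W U = 0 := S.orth W hW U hU
  rw [h0, map_zero] at hd
  have h1 : ctx.g (S.nab X W) U = 0 := S.orth _ (S.nab_mem X hX W hW) U hU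
  have h2 : ctx.g W (S.perpS X U) = 0 := S.orth W hW _ (S.perpS_mem X hX U hU)
  rw [map_add, LinearMap.add_apply, h1, map_add, map_neg, h2] at hd
  have h3 : ctx.g W (S.AopS U X) = ctx.g (S.B X W) U := by linear_combination hd
  rw [ctx.g_symm]; exact h3

end AuxLemmas


/-- On a holomorphic statistical submanifold, for every tangent `X`,
`g(𝒮(X, JX)JX, X) = g(𝒮̄(X, JX)JX, X) - 2 g(B(X,X), B*(X,X))`, where
`𝒮 = ½(R + R*)` and `𝒮̄ = ½(R̄ + R̄*)`. -/
theorem holomorphic_submanifold_S_curvature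
    (ctx : StatContext A V) (M : HolStatMan ctx) (S : StatSub ctx M)
    (hholo : ∀ X ∈ S.T, M.J X ∈ S.T) :
    ∀ X ∈ S.T,
      (1/2 : ℝ) • (ctx.g (curvOf ctx S.nab X (M.J X) (M.J X)) X
          + ctx.g (curvOf ctx S.nabS X (M.J X) (M.J X)) X)
        = (1/2 : ℝ) • (ctx.g (curvOf ctx M.C.op X (M.J X) (M.J X)) X
            + ctx.g (curvOf ctx M.Cs.op X (M.J X) (M.J X)) X)
          - (2 : ℝ) • ctx.g (S.B X X) (S.Bs X X) := by
  intro X hX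
  set Jx := M.J X with hJx
  have hJX : Jx ∈ S.T := hholo X hX
  -- Gauss equations for both connections
  have hG := gauss_curv ctx M.C S.T S.Nor S.orth S.bracket_mem
    S.nab S.B S.Aop S.perp S.Bs S.nab_mem S.B_mem S.perp_mem S.gauss S.wein
    (shape_eq ctx M S) X hX Jx hJX Jx hJX X hX
  have hGs := gauss_curv ctx M.Cs S.T S.Nor S.orth S.bracket_mem
    S.nabS S.Bs S.AopS S.perpS S.B S.nabS_mem S.Bs_mem S.perpS_mem S.gaussS S.weinS
    (shapeS_eq ctx M S) X hX Jx hJX Jx hJX X hX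
  -- identities for the second fundamental forms
  have hBsXJ : S.Bs X Jx = M.J (S.B X X) := Bs_J ctx M S hholo X hX X hX
  have hBXJ : S.B X Jx = M.J (S.Bs X X) := B_J ctx M S hholo X hX X hX
  have hBsJX : S.Bs Jx X = M.J (S.B X X) := by
    rw [S.Bs_symm Jx hJX X hX]; exact hBsXJ
  have hBJX : S.B Jx X = M.J (S.Bs X X) := by
    rw [S.B_symm Jx hJX X hX]; exact hBXJ
  have hBJJ : S.B Jx Jx = - S.B X X := by
    have := B_J ctx M S hholo Jx hJX X hX
    rw [← hJx] at this
    rw [this, hBsJX, M.Jsq]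
  have hBsJJ : S.Bs Jx Jx = - S.Bs X X := by
    have := Bs_J ctx M S hholo Jx hJX X hX
    rw [← hJx] at this
    rw [this, hBJX, M.Jsq]
  -- simplify the extra terms
  have t1 : ctx.g (S.B X Jx) (S.Bs Jx X) = ctx.g (S.B X X) (S.Bs X X) := by
    rw [hBXJ, hBsJX, M.Jiso, ctx.g_symm]
  have t2 : ctx.g (S.Bs X X) (S.B Jx Jx) = - ctx.g (S.B X X) (S.Bs X X) := by
    rw [hBJJ, map_neg, ctx.g_symm]
  have t3 : ctx.g (S.Bs X Jx) (S.B Jx X) = ctx.g (S.B X X) (S.Bs X X) := by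
    rw [hBsXJ, hBJX, M.Jiso, ctx.g_symm]
  have t4 : ctx.g (S.B X X) (S.Bs Jx Jx) = - ctx.g (S.B X X) (S.Bs X X) := by
    rw [hBsJJ, map_neg]
  rw [t1, t2] at hG
  rw [t3, t4] at hGs
  set gp := ctx.g (S.B X X) (S.Bs X X)
  have hG' : ctx.g (curvOf ctx S.nab X Jx Jx) X
      = ctx.g (curvOf ctx M.C.op X Jx Jx) X - gp - gp := by
    rw [hG]; ring
  have hGs' : ctx.g (curvOf ctx S.nabS X Jx Jx) X
      = ctx.g (curvOf ctx M.Cs.op X Jx Jx) X - gp - gp := by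
    rw [hGs]; ring
  rw [hG', hGs']
  module
end

section
/- On a CR-statistical submanifold $N$ of a holomorphic statistical manifold $\overline{N}$, the identity $\mathcal{A}_{fV} X = -\mathcal{A}^*_V(\mathcal{P}X)$ holds for every $X$ in the holomorphic distribution $\mathcal{D}$ and every $V \in \Gamma(f T^{\perp}N)$. -/
open scoped BigOperators

/- Abstract algebraic model of the geometry of a statistical manifold:
`A` plays the role of the ring of smooth functions on the manifold `N̄`,
`V` plays the role of the module of vector fields `Γ(TN̄)`.  -/

variable (A : Type) [CommRing A] [Algebra ℝ A]
variable (V : Type) [AddCommGroup V] [Module A V] [Module ℝ V] [IsScalarTower ℝ A V]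

variable {A V}

/-- On a CR-statistical submanifold, `A_{fV} X = - A*_V (P X)` for every
`X ∈ 𝒟` and every `V ∈ Γ(f T⊥N)`. -/
theorem CR_shape_fV
    (ctx : StatContext A V) (M : HolStatMan ctx) (S : StatSub ctx M) (cr : CRSub ctx M S) :
    ∀ U ∈ S.Nor, (∃ W ∈ S.Nor, U = S.f' W) →
      ∀ X ∈ cr.Dd, S.Aop (S.f' U) X = - S.AopS U (S.P X) := by
  rintro U hU ⟨W, hW, hUW⟩ X hX
  -- basic memberships
  have hXT : X ∈ S.T := cr.Dd_le hX
  have hJXd : M.J X ∈ cr.Dd := cr.J_Dd X hX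
  have hJXT : M.J X ∈ S.T := cr.Dd_le hJXd
  have hfU : S.f' U ∈ S.Nor := S.f_mem U hU
  have hPXT : S.P X ∈ S.T := S.P_mem X hXT
  -- g (J a) b = - g a (J b)
  have hJg : ∀ a b : V, ctx.g (M.J a) b = - ctx.g a (M.J b) := by
    intro a b
    have h := M.Jiso a (M.J b)
    rw [M.Jsq, map_neg] at h
    linear_combination -h
  -- f' W' = J W' - t' W'
  have hfdec : ∀ W' ∈ S.Nor, S.f' W' = M.J W' - S.t' W' := by
    intro W' hW'
    rw [S.tf_dec W' hW']; abel
  -- key: g (J Z) (f' W') = 0 for Z tangent, W' normal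
  have hJT : ∀ Z ∈ S.T, ∀ W' ∈ S.Nor, ctx.g (M.J Z) (S.f' W') = 0 := by
    intro Z hZ W' hW'
    have hZ' : Z ∈ cr.Dd ⊔ cr.Dp := by rw [cr.spanD]; exact hZ
    obtain ⟨z1, hz1, z2, hz2, rfl⟩ := Submodule.mem_sup.mp hZ'
    have h1 : ctx.g (M.J z1) (S.f' W') = 0 :=
      S.orth _ (cr.Dd_le (cr.J_Dd z1 hz1)) _ (S.f_mem W' hW')
    have h2 : ctx.g (M.J z2) (S.f' W') = 0 := by
      rw [hfdec W' hW', map_sub]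
      have ha : ctx.g (M.J z2) (M.J W') = 0 := by
        rw [M.Jiso]; exact S.orth z2 (cr.Dp_le hz2) W' hW'
      have hb : ctx.g (M.J z2) (S.t' W') = 0 := by
        rw [ctx.g_symm]
        exact S.orth _ (S.t_mem W' hW') _ (cr.J_Dp z2 hz2)
      rw [ha, hb, sub_zero]
    rw [map_add, map_add, LinearMap.add_apply, h1, h2, add_zero]
  -- lemma (a): Cs_X (J Z) = J (C_X Z)
  have ha : ∀ X' Z' : V, M.Cs.op X' (M.J Z') = M.J (M.C.op X' Z') := by
    intro X' Z'
    have key : ∀ Y : V, ctx.g (M.Cs.op X' (M.J Z') - M.J (M.C.op X' Z')) Y = 0 := by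
      intro Y
      rw [map_sub, LinearMap.sub_apply]
      have hd := M.dual X' Y (M.J Z')
      have ho := M.omega_par X' Y Z'
      rw [ctx.g_symm (M.Cs.op X' (M.J Z')) Y, ctx.g_symm (M.J (M.C.op X' Z')) Y]
      linear_combination ho - hd
    have := ctx.g_nondeg _ key
    exact sub_eq_zero.mp this
  -- Cs_X (-Z) = - Cs_X Z
  have hnegCs : ∀ X' Z' : V, M.Cs.op X' (-Z') = -(M.Cs.op X' Z') := by
    intro X' Z'
    rw [← neg_one_smul A Z', M.Cs.leibniz]
    have h1 : ctx.D X' (-1 : A) = 0 := by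
      rw [map_neg, Derivation.map_one_eq_zero, neg_zero]
    rw [h1, zero_smul, zero_add, neg_one_smul]
  -- lemma (b): C_X (J Z) = J (Cs_X Z)
  have hb : ∀ X' Z' : V, M.C.op X' (M.J Z') = M.J (M.Cs.op X' Z') := by
    intro X' Z'
    have h1 := ha X' (M.J Z')
    rw [M.Jsq, hnegCs] at h1
    have h2 := congrArg M.J h1
    rw [map_neg, M.Jsq] at h2
    exact (neg_inj.mp h2).symm
  -- shape operator identities
  have hA : ∀ U' ∈ S.Nor, ∀ X' ∈ S.T, ∀ Y' ∈ S.T,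
      ctx.g (S.Aop U' X') Y' = ctx.g U' (S.Bs X' Y') := by
    intro U' hU' X' hX' Y' hY'
    have hd := M.dual X' U' Y'
    have h0 : ctx.g U' Y' = 0 := by
      rw [ctx.g_symm]; exact S.orth Y' hY' U' hU'
    rw [h0, map_zero, S.wein X' hX' U' hU', S.gaussS X' hX' Y' hY'] at hd
    have hp : ctx.g (S.perp X' U') Y' = 0 := by
      rw [ctx.g_symm]; exact S.orth Y' hY' _ (S.perp_mem X' hX' U' hU')
    have hn : ctx.g U' (S.nabS X' Y') = 0 := by
      rw [ctx.g_symm]; exact S.orth _ (S.nabS_mem X' hX' Y' hY') U' hU'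
    rw [map_add, LinearMap.add_apply, map_neg, LinearMap.neg_apply, hp, map_add, hn] at hd
    linear_combination hd
  have hAs : ∀ U' ∈ S.Nor, ∀ X' ∈ S.T, ∀ Y' ∈ S.T,
      ctx.g (S.AopS U' X') Y' = ctx.g U' (S.B X' Y') := by
    intro U' hU' X' hX' Y' hY'
    have hd := M.dual X' Y' U'
    have h0 : ctx.g Y' U' = 0 := S.orth Y' hY' U' hU'
    rw [h0, map_zero, S.weinS X' hX' U' hU', S.gauss X' hX' Y' hY'] at hd
    have hp : ctx.g Y' (S.perpS X' U') = 0 :=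
      S.orth Y' hY' _ (S.perpS_mem X' hX' U' hU')
    have hn : ctx.g (S.nab X' Y') U' = 0 :=
      S.orth _ (S.nab_mem X' hX' Y' hY') U' hU'
    rw [map_add, LinearMap.add_apply, hn, map_add, map_neg, hp] at hd
    rw [ctx.g_symm (S.AopS U' X') Y', ctx.g_symm U' (S.B X' Y')]
    linear_combination hd
  -- P X = J X
  have hPX : S.P X = M.J X := by
    have hdec := S.PF_dec X hXT
    have hFT : S.F X ∈ S.T := by
      have : S.F X = M.J X - S.P X := by rw [hdec]; abel
      rw [this]; exact Submodule.sub_mem _ hJXT hPXT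
    have hF0 : S.F X = 0 := by
      exact Submodule.disjoint_def.mp S.compl.disjoint _ hFT (S.F_mem X hXT)
    rw [hdec, hF0, add_zero]
  -- the combined field
  set E := S.Aop (S.f' U) X + S.AopS U (S.P X) with hE
  have hET : E ∈ S.T :=
    Submodule.add_mem _ (S.A_mem _ hfU X hXT) (S.As_mem U hU _ hPXT)
  have hE0 : E = 0 := by
    apply ctx.g_nondeg
    intro Y
    have hYtop : Y ∈ S.T ⊔ S.Nor := by rw [S.compl.sup_eq_top]; trivial
    obtain ⟨y, hy, z, hz, rfl⟩ := Submodule.mem_sup.mp hYtop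
    have h2 : ctx.g E z = 0 := S.orth E hET z hz
    have h1 : ctx.g E y = 0 := by
      rw [hE, map_add, LinearMap.add_apply]
      rw [hA _ hfU X hXT y hy, hAs U hU _ hPXT y hy]
      -- g (f'U) (Bs X y) = - g U (B (P X) y)
      have hBs1 : ctx.g (S.f' U) (S.Bs X y) = - ctx.g U (M.J (S.Bs X y)) := by
        rw [hfdec U hU, map_sub, LinearMap.sub_apply]
        have ht : ctx.g (S.t' U) (S.Bs X y) = 0 :=
          S.orth _ (S.t_mem U hU) _ (S.Bs_mem X hXT y hy)
        rw [ht, sub_zero, hJg]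
      have hBs2 : S.Bs X y = M.Cs.op y X - S.nabS y X := by
        rw [S.Bs_symm X hXT y hy]
        have := S.gaussS y hy X hXT
        rw [this]; abel
      have hJBs : ctx.g U (M.J (S.Bs X y)) = ctx.g U (S.B (S.P X) y) := by
        rw [hBs2, map_sub]
        have hC : M.J (M.Cs.op y X) = S.nab y (M.J X) + S.B (S.P X) y := by
          rw [← hb y X, S.gauss y hy _ hJXT, S.B_symm y hy _ hJXT, hPX]
        rw [hC]
        have hn1 : ctx.g U (S.nab y (M.J X)) = 0 := by
          rw [ctx.g_symm]; exact S.orth _ (S.nab_mem y hy _ hJXT) U hU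
        have hn2 : ctx.g U (M.J (S.nabS y X)) = 0 := by
          rw [ctx.g_symm, hUW]
          exact hJT _ (S.nabS_mem y hy X hXT) W hW
        rw [map_sub, map_add, hn1, hn2, sub_zero, zero_add]
      rw [hBs1, hJBs]
      ring
    rw [map_add, h1, h2, add_zero]
  exact eq_neg_of_add_eq_zero_left hE0
end

section
/- Let $N$ be a CR-statistical submanifold of a holomorphic statistical manifold $\overline{N}$. For any $X, Y \in \mathcal{D}^{\perp}$, the normal vector field $\nabla^{\perp}_X(\mathcal{J}Y) - \nabla^{\perp}_Y(\mathcal{J}X)$ lies in $\mathcal{J}\mathcal{D}^{\perp}$, i.e., it is orthogonal to the complementary subbundle $\mu$ of $\mathcal{J}\mathcal{D}^{\perp}$ in $T^{\perp}N$. -/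
open scoped BigOperators

/- Abstract algebraic model of the geometry of a statistical manifold:
`A` plays the role of the ring of smooth functions on the manifold `N̄`,
`V` plays the role of the module of vector fields `Γ(TN̄)`.  -/

variable (A : Type) [CommRing A] [Algebra ℝ A]
variable (V : Type) [AddCommGroup V] [Module A V] [Module ℝ V] [IsScalarTower ℝ A V]

variable {A V}

/-- On a CR-statistical submanifold, for `X, Y ∈ 𝒟⊥` the normal field
`∇⊥_X (JY) - ∇⊥_Y (JX)` lies in `J𝒟⊥`, i.e. it is orthogonal to the complementary
subbundle `μ` of `J𝒟⊥` in `T⊥N`. -/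
theorem CR_perp_in_JDperp
    (ctx : StatContext A V) (M : HolStatMan ctx) (S : StatSub ctx M) (cr : CRSub ctx M S) :
    ∀ X ∈ cr.Dp, ∀ Y ∈ cr.Dp, ∀ U ∈ S.Nor,
      (∀ Z ∈ cr.Dp, ctx.g U (M.J Z) = 0) →
      ctx.g (S.perp X (M.J Y) - S.perp Y (M.J X)) U = 0 := by
  intro X hX Y hY U hU hUmu
  -- g (J W) U = 0 for any tangent W
  have hT : ∀ W ∈ S.T, ctx.g (M.J W) U = 0 := by
    intro W hW
    rw [← cr.spanD] at hW
    rcases Submodule.mem_sup.mp hW with ⟨a, ha, b, hb, rfl⟩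
    rw [map_add, map_add, LinearMap.add_apply]
    have h1 : ctx.g (M.J a) U = 0 := S.orth _ (cr.Dd_le (cr.J_Dd a ha)) U hU
    have h2 : ctx.g (M.J b) U = 0 := by rw [ctx.g_symm]; exact hUmu b hb
    rw [h1, h2, add_zero]
  -- ∇*_X (J Z) = J (∇_X Z)
  have key : ∀ X' Z : V, M.Cs.op X' (M.J Z) = M.J (M.C.op X' Z) := by
    intro X' Z
    have h : M.Cs.op X' (M.J Z) - M.J (M.C.op X' Z) = 0 := by
      apply ctx.g_nondeg
      intro W
      have hd := M.dual X' W (M.J Z)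
      have ho := M.omega_par X' W Z
      have h1 : ctx.g W (M.Cs.op X' (M.J Z)) = ctx.g W (M.J (M.C.op X' Z)) :=
        add_left_cancel (hd.symm.trans ho)
      rw [map_sub, LinearMap.sub_apply, ctx.g_symm _ W, ctx.g_symm _ W, h1, sub_self]
    exact sub_eq_zero.mp h
  -- op X (-Y) = - op X Y
  have op_neg : ∀ (C : AffConn ctx) (X' Y' : V), C.op X' (-Y') = -C.op X' Y' := by
    intro C X' Y'
    have h0 : C.op X' 0 = 0 := by
      have := C.add_right X' 0 0
      simpa using this
    have h := C.add_right X' Y' (-Y')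
    rw [add_neg_cancel, h0] at h
    exact eq_neg_of_add_eq_zero_right h.symm
  -- ∇_X (J Y) = J (∇*_X Y)
  have key2 : ∀ X' Z : V, M.C.op X' (M.J Z) = M.J (M.Cs.op X' Z) := by
    intro X' Z
    have h := key X' (M.J Z)
    rw [M.Jsq, op_neg] at h
    have h2 := congrArg M.J h
    rw [map_neg, M.Jsq] at h2
    have h3 : M.C.op X' (M.J Z) = - - M.C.op X' (M.J Z) := (neg_neg _).symm
    rw [h3, ← h2, neg_neg]
  -- perp X (J Y) = C.op X (J Y) + Aop (J Y) X
  have hperp : ∀ Z ∈ cr.Dp, ∀ W ∈ cr.Dp,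
      ctx.g (S.perp Z (M.J W)) U = ctx.g (M.J (S.Bs Z W)) U := by
    intro Z hZ W hW
    have hZT := cr.Dp_le hZ
    have hWT := cr.Dp_le hW
    have hw := S.wein Z hZT (M.J W) (cr.J_Dp W hW)
    have : S.perp Z (M.J W) = M.C.op Z (M.J W) + S.Aop (M.J W) Z := by
      rw [hw]; abel
    rw [this, map_add, LinearMap.add_apply,
      S.orth _ (S.A_mem _ (cr.J_Dp W hW) _ hZT) U hU, add_zero,
      key2, S.gaussS Z hZT W hWT, map_add, map_add, LinearMap.add_apply,
      hT _ (S.nabS_mem Z hZT W hWT), zero_add]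
  rw [map_sub, LinearMap.sub_apply, hperp X hX Y hY, hperp Y hY X hX,
    S.Bs_symm X (cr.Dp_le hX) Y (cr.Dp_le hY), sub_self]
end

section
/- Let $X \in \mathcal{D}$ and $Z \in \mathcal{D}^{\perp}$ on a CR-statistical submanifold $N$ of a holomorphic statistical manifold. Then $g(Z, \nabla^*_X X) = g(\mathcal{A}^*_{\mathcal{J}Z} X, \mathcal{J}X)$, where $\mathcal{A}^*$ is the shape operator for the dual connection. -/
open scoped BigOperators

/- Abstract algebraic model of the geometry of a statistical manifold:
`A` plays the role of the ring of smooth functions on the manifold `N̄`,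
`V` plays the role of the module of vector fields `Γ(TN̄)`.  -/

variable (A : Type) [CommRing A] [Algebra ℝ A]
variable (V : Type) [AddCommGroup V] [Module A V] [Module ℝ V] [IsScalarTower ℝ A V]

variable {A V}

/-- For `X ∈ 𝒟` and `Z ∈ 𝒟⊥` on a CR-statistical submanifold,
`g(Z, ∇*_X X) = g(A*_{JZ} X, JX)`. -/
theorem CR_gZ_nablaS
    (ctx : StatContext A V) (M : HolStatMan ctx) (S : StatSub ctx M) (cr : CRSub ctx M S) :
    ∀ X ∈ cr.Dd, ∀ Z ∈ cr.Dp,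
      ctx.g Z (S.nabS X X) = ctx.g (S.AopS (M.J Z) X) (M.J X) := by
  intro X hX Z hZ
  have hXT : X ∈ S.T := cr.Dd_le hX
  have hZT : Z ∈ S.T := cr.Dp_le hZ
  have hJXT : M.J X ∈ S.T := cr.Dd_le (cr.J_Dd X hX)
  have hJZ : M.J Z ∈ S.Nor := cr.J_Dp Z hZ
  have hgXZ : ctx.g X Z = 0 := cr.orthD X hX Z hZ
  have hgJXJZ : ctx.g (M.J X) (M.J Z) = 0 := by rw [M.Jiso]; exact hgXZ
  -- e1 : duality with (X, Z, X)
  have e1 := M.dual X Z X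
  rw [ctx.g_symm Z X, hgXZ, map_zero] at e1
  -- e2 : g Z (Cs X X) = g Z (nabS X X)
  have e2 : ctx.g Z (M.Cs.op X X) = ctx.g Z (S.nabS X X) := by
    rw [S.gaussS X hXT X hXT, map_add, S.orth Z hZT _ (S.Bs_mem X hXT X hXT), add_zero]
  -- e3 : duality with (X, JX, JZ)
  have e3 := M.dual X (M.J X) (M.J Z)
  rw [hgJXJZ, map_zero] at e3
  -- e4 : Weingarten
  have e4 : ctx.g (M.J X) (M.Cs.op X (M.J Z)) = - ctx.g (M.J X) (S.AopS (M.J Z) X) := by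
    rw [S.weinS X hXT _ hJZ, map_add, map_neg,
      S.orth (M.J X) hJXT _ (S.perpS_mem X hXT _ hJZ), add_zero]
  -- e5 : parallel Kaehler form with (X, JX, Z)
  have e5 := M.omega_par X (M.J X) Z
  rw [hgJXJZ, map_zero, M.Jiso] at e5
  have e6 : ctx.g (M.C.op X Z) X = ctx.g X (M.C.op X Z) := ctx.g_symm _ _
  have e7 : ctx.g (S.AopS (M.J Z) X) (M.J X) = ctx.g (M.J X) (S.AopS (M.J Z) X) :=
    ctx.g_symm _ _
  linear_combination -e2 - e1 - e6 + e5 - e3 - e4 - e7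
end

section
/- Let $N$ be a CR-statistical submanifold of a holomorphic statistical manifold $\overline{N}$ whose holomorphic distribution $\mathcal{D}$ is involutive (so that $\mathcal{B}(\mathcal{J}X, Y) = \mathcal{B}(\mathcal{J}Y, X)$ for $X, Y \in \mathcal{D}$). If $N$ is mixed totally geodesic with respect to $\overline{\nabla}$ (i.e., $\mathcal{B}(\mathcal{D}, \mathcal{D}^{\perp}) = 0$), then $\mathcal{A}^*_V(\mathcal{J}X) = -\mathcal{J}\mathcal{A}^*_V X$ for all $X \in \mathcal{D}$ and $V \in \Gamma(\mu)$. -/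
open scoped BigOperators

/- Abstract algebraic model of the geometry of a statistical manifold:
`A` plays the role of the ring of smooth functions on the manifold `N̄`,
`V` plays the role of the module of vector fields `Γ(TN̄)`.  -/

variable (A : Type) [CommRing A] [Algebra ℝ A]
variable (V : Type) [AddCommGroup V] [Module A V] [Module ℝ V] [IsScalarTower ℝ A V]

variable {A V}

/-- If the holomorphic distribution `𝒟` is involutive (so that
`B(JX, Y) = B(JY, X)` for `X, Y ∈ 𝒟`) and `N` is mixed totally geodesic with respect
to `∇` (i.e. `B(𝒟, 𝒟⊥) = 0`), then `A*_V (JX) = - J A*_V X` for all `X ∈ 𝒟` and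
`V ∈ Γ(μ)`. -/
theorem CR_mixed_totally_geodesic_shape_anticommutes
    (ctx : StatContext A V) (M : HolStatMan ctx) (S : StatSub ctx M) (cr : CRSub ctx M S)
    (hinv : ∀ X ∈ cr.Dd, ∀ Y ∈ cr.Dd, ctx.bracket X Y ∈ cr.Dd)
    (hBJ : ∀ X ∈ cr.Dd, ∀ Y ∈ cr.Dd, S.B (M.J X) Y = S.B (M.J Y) X)
    (hmixed : ∀ X ∈ cr.Dd, ∀ Z ∈ cr.Dp, S.B X Z = 0) :
    ∀ X ∈ cr.Dd, ∀ U ∈ S.Nor, (∀ Z ∈ cr.Dp, ctx.g U (M.J Z) = 0) →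
      S.AopS U (M.J X) = - M.J (S.AopS U X) := by
  intro X hX U hU hUmu
  -- shape operator / second fundamental form relation
  have gAs : ∀ Y ∈ S.T, ∀ W ∈ S.T, ctx.g (S.AopS U Y) W = ctx.g (S.B Y W) U := by
    intro Y hY W hW
    have h := M.dual Y W U
    rw [S.orth W hW U hU, map_zero, S.gauss Y hY W hW, S.weinS Y hY U hU] at h
    have h1 : ctx.g (S.nab Y W) U = 0 := S.orth _ (S.nab_mem Y hY W hW) U hU
    have h2 : ctx.g W (S.perpS Y U) = 0 := S.orth W hW _ (S.perpS_mem Y hY U hU)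
    simp only [map_add, map_neg, LinearMap.add_apply, LinearMap.neg_apply, h1] at h
    rw [h2] at h
    have hsymm := ctx.g_symm W (S.AopS U Y)
    linear_combination h - hsymm
  -- a vector orthogonal to Dd, Dp and Nor is zero
  have zero_of : ∀ w : V, (∀ y ∈ cr.Dd, ctx.g w y = 0) → (∀ z ∈ cr.Dp, ctx.g w z = 0) →
      (∀ n ∈ S.Nor, ctx.g w n = 0) → w = 0 := by
    intro w h1 h2 h3
    apply ctx.g_nondeg
    intro Y
    have hY : Y ∈ S.T ⊔ S.Nor := by rw [S.compl.sup_eq_top]; trivial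
    obtain ⟨t, ht, n, hn, rfl⟩ := Submodule.mem_sup.mp hY
    have ht' : t ∈ cr.Dd ⊔ cr.Dp := by rw [cr.spanD]; exact ht
    obtain ⟨y, hy, z, hz, rfl⟩ := Submodule.mem_sup.mp ht'
    simp [map_add, h1 y hy, h2 z hz, h3 n hn]
  -- a tangent vector orthogonal to Dp lies in Dd
  have in_Dd : ∀ w ∈ S.T, (∀ z ∈ cr.Dp, ctx.g w z = 0) → w ∈ cr.Dd := by
    intro w hw h
    have hw' : w ∈ cr.Dd ⊔ cr.Dp := by rw [cr.spanD]; exact hw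
    obtain ⟨y, hy, z, hz, rfl⟩ := Submodule.mem_sup.mp hw'
    have hz0 : z = 0 := by
      apply zero_of
      · intro y' hy'
        rw [ctx.g_symm]; exact cr.orthD y' hy' z hz
      · intro z' hz'
        have e1 : ctx.g (y + z) z' = 0 := h z' hz'
        have e2 : ctx.g y z' = 0 := cr.orthD y hy z' hz'
        simp only [map_add, LinearMap.add_apply, e2] at e1
        linear_combination e1
      · intro n hn
        exact S.orth z (cr.Dp_le hz) n hn
    rw [hz0, add_zero]
    exact hy
  -- AopS U X lies in Dd
  have hmix0 : ∀ Y ∈ cr.Dd, ∀ z ∈ cr.Dp, ctx.g (S.AopS U Y) z = 0 := by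
    intro Y hY z hz
    rw [gAs Y (cr.Dd_le hY) z (cr.Dp_le hz), hmixed Y hY z hz]
    simp
  have hA_Dd : S.AopS U X ∈ cr.Dd :=
    in_Dd _ (S.As_mem U hU X (cr.Dd_le hX)) (hmix0 X hX)
  have hJX : M.J X ∈ cr.Dd := cr.J_Dd X hX
  -- anti-commutation of g with J
  have gJ : ∀ a b : V, ctx.g (M.J a) b = - ctx.g a (M.J b) := by
    intro a b
    have := M.Jiso a (M.J b)
    rw [M.Jsq b] at this
    simp only [map_neg, LinearMap.neg_apply] at this
    linear_combination -this
  -- the difference vector vanishes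
  have key : S.AopS U (M.J X) + M.J (S.AopS U X) = 0 := by
    apply zero_of
    · intro y hy
      have e1 : ctx.g (S.AopS U (M.J X)) y = ctx.g (S.B (M.J X) y) U :=
        gAs _ (cr.Dd_le hJX) y (cr.Dd_le hy)
      have e2 : ctx.g (M.J (S.AopS U X)) y = - ctx.g (S.AopS U X) (M.J y) := gJ _ _
      have e3 : ctx.g (S.AopS U X) (M.J y) = ctx.g (S.B X (M.J y)) U :=
        gAs _ (cr.Dd_le hX) _ (cr.Dd_le (cr.J_Dd y hy))
      have e4 : S.B X (M.J y) = S.B (M.J X) y := by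
        rw [S.B_symm X (cr.Dd_le hX) (M.J y) (cr.Dd_le (cr.J_Dd y hy)), hBJ y hy X hX]
      simp only [map_add, LinearMap.add_apply, e1, e2, e3, e4]
      ring
    · intro z hz
      have e1 : ctx.g (S.AopS U (M.J X)) z = 0 := hmix0 _ hJX z hz
      have e2 : ctx.g (M.J (S.AopS U X)) z = 0 := cr.orthD _ (cr.J_Dd _ hA_Dd) z hz
      simp [map_add, e1, e2]
    · intro n hn
      have e1 : ctx.g (S.AopS U (M.J X)) n = 0 :=
        S.orth _ (S.As_mem U hU _ (cr.Dd_le hJX)) n hn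
      have e2 : ctx.g (M.J (S.AopS U X)) n = 0 :=
        S.orth _ (cr.Dd_le (cr.J_Dd _ hA_Dd)) n hn
      simp [map_add, e1, e2]
  exact eq_neg_of_add_eq_zero_left key
end

section
/- Let $(\overline{N}, g, \mathcal{J})$ be a Kaehler manifold and $\Lambda$ a vector field. Define $K_1(X,Y) = [g(\mathcal{J}\Lambda, X)g(\mathcal{J}\Lambda, Y) - g(\Lambda, X)g(\Lambda, Y)]\Lambda + [g(\mathcal{J}\Lambda, X)g(\Lambda, Y) + g(\Lambda, X)g(\mathcal{J}\Lambda, Y)]\mathcal{J}\Lambda$. Then $K_1$ is symmetric, satisfies $g(K_1(X,Y),Z) = g(Y, K_1(X,Z))$, and satisfies $K_1(X, \mathcal{J}Y) + \mathcal{J}K_1(X,Y) = 0$; hence $(\overline{N}, \nabla^g + K_1, g, \mathcal{J})$ is a holomorphic statistical manifold. -/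
open scoped BigOperators

/- Abstract algebraic model of the geometry of a statistical manifold:
`A` plays the role of the ring of smooth functions on the manifold `N̄`,
`V` plays the role of the module of vector fields `Γ(TN̄)`.  -/

variable (A : Type) [CommRing A] [Algebra ℝ A]
variable (V : Type) [AddCommGroup V] [Module A V] [Module ℝ V] [IsScalarTower ℝ A V]

variable {A V}

/-- On a Kaehler manifold `(N̄, g, J)` with a vector field `Λ`, the tensor
`K₁(X,Y) = [g(JΛ,X)g(JΛ,Y) - g(Λ,X)g(Λ,Y)]Λ + [g(JΛ,X)g(Λ,Y) + g(Λ,X)g(JΛ,Y)]JΛ`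
is symmetric, `g`-self-adjoint, and satisfies `K₁(X,JY) + J K₁(X,Y) = 0`; hence
`∇ := ∇^g + K₁` makes `(N̄, ∇, g, J)` a holomorphic statistical manifold. -/
theorem K1_gives_holomorphic_statistical
    (ctx : StatContext A V) (J : V →ₗ[A] V)
    (hJsq : ∀ X : V, J (J X) = -X)
    (hJiso : ∀ X Y : V, ctx.g (J X) (J Y) = ctx.g X Y)
    (LC : AffConn ctx) (hLCtf : IsTorsionFree ctx LC)
    (hLCmet : ∀ X Y Z : V, ctx.D X (ctx.g Y Z) = ctx.g (LC.op X Y) Z + ctx.g Y (LC.op X Z))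
    (hLCJ : ∀ X Y : V, LC.op X (J Y) = J (LC.op X Y))
    (Λ : V) (K1 : V → V → V)
    (hK1def : ∀ X Y : V, K1 X Y =
      (ctx.g (J Λ) X * ctx.g (J Λ) Y - ctx.g Λ X * ctx.g Λ Y) • Λ
        + (ctx.g (J Λ) X * ctx.g Λ Y + ctx.g Λ X * ctx.g (J Λ) Y) • J Λ) :
    (∀ X Y : V, K1 X Y = K1 Y X) ∧
    (∀ X Y Z : V, ctx.g (K1 X Y) Z = ctx.g Y (K1 X Z)) ∧
    (∀ X Y : V, K1 X (J Y) + J (K1 X Y) = 0) ∧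
    (∀ C : AffConn ctx, (∀ X Y : V, C.op X Y = LC.op X Y + K1 X Y) →
      IsStatistical ctx C ∧
        ∀ X Y Z : V, ctx.D X (ctx.g Y (J Z)) =
          ctx.g (C.op X Y) (J Z) + ctx.g Y (J (C.op X Z))) := by
  -- auxiliary facts
  have hgJ : ∀ Y : V, ctx.g Λ (J Y) = - ctx.g (J Λ) Y := by
    intro Y
    have h := hJiso Λ (J Y)
    rw [hJsq, map_neg] at h
    exact h.symm
  -- g applied to K1
  have hgK1 : ∀ X Y Z : V, ctx.g (K1 X Y) Z =
      (ctx.g (J Λ) X * ctx.g (J Λ) Y - ctx.g Λ X * ctx.g Λ Y) * ctx.g Λ Z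
        + (ctx.g (J Λ) X * ctx.g Λ Y + ctx.g Λ X * ctx.g (J Λ) Y) * ctx.g (J Λ) Z := by
    intro X Y Z
    rw [hK1def]
    simp [map_add, map_smul, smul_eq_mul]
  -- symmetry
  have hsymm : ∀ X Y : V, K1 X Y = K1 Y X := by
    intro X Y
    rw [hK1def, hK1def]
    ring_nf
  -- self-adjointness
  have hsa : ∀ X Y Z : V, ctx.g (K1 X Y) Z = ctx.g Y (K1 X Z) := by
    intro X Y Z
    rw [ctx.g_symm Y (K1 X Z), hgK1, hgK1]
    ring
  -- anticommutation with J
  have hanti : ∀ X Y : V, K1 X (J Y) + J (K1 X Y) = 0 := by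
    intro X Y
    rw [hK1def, hK1def]
    simp only [map_add, map_smul, hJsq, hJiso, hgJ]
    module
  refine ⟨hsymm, hsa, hanti, ?_⟩
  intro C hC
  have hnab : ∀ X Y Z : V, nablaG ctx C X Y Z = - (2 * ctx.g (K1 X Y) Z) := by
    intro X Y Z
    unfold nablaG
    rw [hC, hC, map_add, LinearMap.add_apply, map_add, hLCmet X Y Z, ← hsa X Y Z]
    ring
  refine ⟨⟨?_, ?_⟩, ?_⟩
  · intro X Y
    rw [hC, hC, hsymm Y X, ← hLCtf X Y]
    abel
  · intro X Y Z
    rw [hnab, hnab, hgK1, hgK1]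
    ring
  · intro X Y Z
    rw [hC, hC, map_add, LinearMap.add_apply, map_add, map_add, hLCmet X Y (J Z), hLCJ]
    have h1 : ctx.g Y (J (K1 X Z)) = - ctx.g (K1 X Y) (J Z) := by
      have h2 : J (K1 X Z) = - K1 X (J Z) := by
        exact eq_neg_of_add_eq_zero_right (hanti X Z)
      rw [h2, map_neg, ← hsa]
    rw [h1]
    ring
end
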